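/- For a matroid M and a set W ⊆ E(M), the following are equivalent: (1) W is a union of circuits of M; (2) W never meets a cocircuit of M in exactly one element; (3) W never meets any union of cocircuits of M in exactly one element. -/

import Mathlib

open Set

namespace Matroid

variable {α : Type*}

/-- A circuit of a matroid is a minimal dependent set. -/
def Circuit (M : Matroid α) (C : Set α) : Prop :=
  M.Dep C ∧ ∀ D, M.Dep D → D ⊆ C → D = C

/-- A cocircuit is a circuit of the dual matroid. -/
def Cocircuit (M : Matroid α) (D : Set α) : Prop := M✶.Circuit D

/-- The matroid obtained by deleting the set `D`. -/
def delete' (M : Matroid α) (D : Set α) : Matroid α := M ↾ (M.E \ D)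

/-- The matroid obtained by contracting the set `C`. -/
def contract' (M : Matroid α) (C : Set α) : Matroid α := ((M✶).delete' C)✶

/-- `N` is a minor of `M` if it is obtained from `M` by contracting a set `C`
and deleting a set `D`, where `C` and `D` are disjoint subsets of the ground set. -/
def IsMinor' (N M : Matroid α) : Prop :=
  ∃ C D, Disjoint C D ∧ C ∪ D ⊆ M.E ∧ N = (M.contract' C).delete' D

/-- A scrawl is a union of circuits. -/
def Scrawl (M : Matroid α) (W : Set α) : Prop :=
  ∃ S : Set (Set α), (∀ C ∈ S, M.Circuit C) ∧ W = ⋃₀ S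

/-- A matroid is tame if every circuit-cocircuit intersection is finite. -/
def Tame (M : Matroid α) : Prop :=
  ∀ C D, M.Circuit C → M.Cocircuit D → (C ∩ D).Finite

/-- A `k`-painting of a matroid: nonzero coefficients on each circuit and each
cocircuit such that each circuit-cocircuit pair is "orthogonal". -/
def IsPainting {k : Type*} [Field k] (M : Matroid α)
    (c : Set α → α → k) (d : Set α → α → k) : Prop :=
  (∀ C, M.Circuit C → ∀ e ∈ C, c C e ≠ 0) ∧
  (∀ D, M.Cocircuit D → ∀ e ∈ D, d D e ≠ 0) ∧
  (∀ C D, M.Circuit C → M.Cocircuit D →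
    (C ∩ D).Finite ∧ ∑ᶠ e ∈ C ∩ D, c C e * d D e = 0)

end Matroid

/-!
If `W` is a union of circuits and `Z` a union of cocircuits with `W ∩ Z = {e}`, then a circuit
`C ⊆ W` and a cocircuit `K ⊆ Z` through `e` satisfy `C ∩ K = {e}`, which is impossible.
Conversely, take `e ∈ W`. If `e ∈ cl (W \ {e})`, some circuit through `e` lies inside `W`.
Otherwise a hyperplane contains `W \ {e}` but not `e`, and its complement is a cocircuit
meeting `W` exactly in `e`.
-/

namespace Matroid

variable {α : Type*} {M : Matroid α} {C K W X Z : Set α} {e : α}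

theorem circuit_iff_isCircuit : M.Circuit C ↔ M.IsCircuit C :=
  isCircuit_iff.symm

theorem cocircuit_iff_isCocircuit : M.Cocircuit K ↔ M.IsCocircuit K :=
  circuit_iff_isCircuit

theorem scrawl_iff_forall_mem_exists_isCircuit :
    M.Scrawl W ↔ ∀ e ∈ W, ∃ C ⊆ W, M.IsCircuit C ∧ e ∈ C := by
  simp_rw [Scrawl, circuit_iff_isCircuit]
  constructor
  · rintro ⟨S, hS, rfl⟩ e ⟨C, hCS, heC⟩
    exact ⟨C, subset_sUnion_of_mem hCS, hS C hCS, heC⟩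
  · intro h
    refine ⟨{C | M.IsCircuit C ∧ C ⊆ W}, fun C hC ↦ hC.1, subset_antisymm (fun e he ↦ ?_) ?_⟩
    · obtain ⟨C, hCW, hC, heC⟩ := h e he
      exact ⟨C, ⟨hC, hCW⟩, heC⟩
    · exact sUnion_subset fun C hC ↦ hC.2

theorem Scrawl.inter_ne_singleton (hW : M.Scrawl W) (hZ : M✶.Scrawl Z) : W ∩ Z ≠ {e} := by
  intro hWZ
  obtain ⟨heW, heZ⟩ : e ∈ W ∩ Z := hWZ ▸ rfl
  obtain ⟨C, hCW, hC, heC⟩ := scrawl_iff_forall_mem_exists_isCircuit.1 hW e heW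
  obtain ⟨K, hKZ, hK, heK⟩ := scrawl_iff_forall_mem_exists_isCircuit.1 hZ e heZ
  refine hC.inter_isCocircuit_ne_singleton (e := e) hK (subset_antisymm ?_ (by simp [heC, heK]))
  exact hWZ ▸ inter_subset_inter hCW hKZ

theorem Cocircuit.dual_scrawl (hK : M.Cocircuit K) : M✶.Scrawl K :=
  ⟨{K}, fun _ hC ↦ hC ▸ hK, (sUnion_singleton K).symm⟩

/-- The witness is the complement of the hyperplane `cl (B \ {e})`, for a base `B` containing `e`
and a basis of `X`. -/
theorem exists_isCocircuit_mem_disjoint_of_notMem_closure (hX : X ⊆ M.E) (heE : e ∈ M.E)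
    (he : e ∉ M.closure X) : ∃ K, M.IsCocircuit K ∧ e ∈ K ∧ Disjoint K X := by
  obtain ⟨I, hI⟩ := M.exists_isBasis X hX
  have heI : e ∉ I := fun h ↦ he (M.subset_closure X hX (hI.subset h))
  have hIe : M.Indep (insert e I) := by
    rw [hI.indep.insert_indep_iff_of_notMem heI, hI.closure_eq_closure]
    exact ⟨heE, he⟩
  obtain ⟨B, hB, hIeB⟩ := hIe.exists_isBase_superset
  have heB : e ∈ B := hIeB (mem_insert e I)
  have hXcl : X ⊆ M.closure (B \ {e}) :=
    hI.subset_closure.trans <| M.closure_subset_closure <|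
      subset_sdiff_singleton ((subset_insert e I).trans hIeB) heI
  refine ⟨_, hB.compl_closure_sdiff_singleton_isCocircuit heB,
    ⟨heE, hB.indep.notMem_closure_sdiff_of_mem heB⟩, ?_⟩
  exact disjoint_sdiff_left.mono_right hXcl

theorem scrawl_of_forall_isCocircuit_inter_ne_singleton (hW : W ⊆ M.E)
    (h : ∀ K e, M.IsCocircuit K → W ∩ K ≠ {e}) : M.Scrawl W := by
  refine scrawl_iff_forall_mem_exists_isCircuit.2 fun e heW ↦ ?_
  have hecl : e ∈ M.closure (W \ {e}) := by
    by_contra hecl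
    obtain ⟨K, hK, heK, hKW⟩ :=
      exists_isCocircuit_mem_disjoint_of_notMem_closure (sdiff_subset.trans hW) (hW heW) hecl
    refine h K e hK (subset_antisymm (fun x hx ↦ ?_) (by simp [heW, heK]))
    exact by_contra fun hxe ↦ disjoint_left.1 hKW hx.2 ⟨hx.1, hxe⟩
  obtain ⟨C, hCW, hC, heC⟩ := exists_isCircuit_of_mem_closure hecl (fun h ↦ h.2 rfl)
  exact ⟨C, hCW.trans (insert_subset heW sdiff_subset), hC, heC⟩

end Matroid

/-- A set is a union of circuits iff it never meets a cocircuit exactly once, iff it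
never meets a union of cocircuits exactly once. -/
theorem stmt5 {α : Type*} (M : Matroid α) (W : Set α) (hW : W ⊆ M.E) :
    (M.Scrawl W ↔ ∀ D, M.Cocircuit D → ¬ ∃ e, W ∩ D = {e}) ∧
    (M.Scrawl W ↔ ∀ Z, M✶.Scrawl Z → ¬ ∃ e, W ∩ Z = {e}) := by
  have h13 : M.Scrawl W → ∀ Z, M✶.Scrawl Z → ¬ ∃ e, W ∩ Z = {e} :=
    fun hW' Z hZ ⟨_, he⟩ ↦ hW'.inter_ne_singleton hZ he
  have h32 : (∀ Z, M✶.Scrawl Z → ¬ ∃ e, W ∩ Z = {e}) →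
      ∀ D, M.Cocircuit D → ¬ ∃ e, W ∩ D = {e} :=
    fun h D hD ↦ h D hD.dual_scrawl
  have h21 : (∀ D, M.Cocircuit D → ¬ ∃ e, W ∩ D = {e}) → M.Scrawl W := fun h ↦
    Matroid.scrawl_of_forall_isCocircuit_inter_ne_singleton hW fun K e hK hWK ↦
      h K (Matroid.cocircuit_iff_isCocircuit.2 hK) ⟨e, hWK⟩
  exact ⟨⟨fun h ↦ h32 (h13 h), h21⟩, ⟨h13, fun h ↦ h21 (h32 h)⟩⟩
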